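/- arXiv:1401.6907 — 5 statements merged into one kernel-verified Lean document; each statement's English description precedes it below -/
import Mathlib

section
/- Let ⫝ be a pre-independence relation on a set M, A ⊆ M, and (a_i)_{i∈I} an independent sequence over A indexed by a linear order (I,<). Then for any two finite subsets S, T of {a_i : i ∈ I} with S ∩ T = ∅, we have S ⫝_A T. -/
/-!
Induct on the finite set of indices involved. If `j` is the largest index and, say, `a j` lies
in `T`, then `S` and the rest `T'` of `T` are independent by induction, while `a j` is
independent from everything before it, in particular from `S ∪ T'`. A symmetric
base-monotonicity/transitivity argument then moves `a j` into the right-hand side.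
-/

/-- A pre-independence relation on a set `M`. `ind A C B` means `A ⫝_C B`
(`A` is independent from `B` over `C`). -/
structure PreIndep (M : Type*) where
  ind : Set M → Set M → Set M → Prop
  existence : ∀ A B : Set M, ind A A B
  monotonicity : ∀ A B C D : Set M, ind A C B → D ⊆ A → ind D C B
  baseMonotonicity : ∀ A B C D : Set M, D ⊆ C → C ⊆ B → ind A D B → ind A C B
  symmetry : ∀ A B C : Set M, ind A C B → ind B C A
  transitivity : ∀ A B C D : Set M, D ⊆ C → C ⊆ B → ind B C A → ind C D A → ind B D A
  normality : ∀ A B C : Set M, ind A C B → ind (A ∪ C) C B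
  finiteCharacter : ∀ A B C : Set M, (∀ A₀ : Set M, A₀ ⊆ A → A₀.Finite → ind A₀ C B) → ind A C B
  antiReflexivity : ∀ A B : Set M, ind A B A → ∀ C : Set M, ind A B C

namespace PreIndep

variable {M : Type*} (P : PreIndep M)

theorem ind_mono_right {X Y Y' C : Set M} (h : P.ind X C Y) (hY : Y' ⊆ Y) : P.ind X C Y' :=
  P.symmetry _ _ _ (P.monotonicity _ _ _ _ (P.symmetry _ _ _ h) hY)

theorem ind_empty_right (X C : Set M) : P.ind X C ∅ :=
  P.symmetry _ _ _ (P.monotonicity _ _ _ _ (P.existence C X) (Set.empty_subset C))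

theorem ind_insert_right {X Y C : Set M} {b : M} (hXY : P.ind X C Y)
    (hb : P.ind (X ∪ Y) C {b}) : P.ind X C (insert b Y) := by
  have hb_base : P.ind {b} (Y ∪ C) (X ∪ Y ∪ C) :=
    P.baseMonotonicity _ _ _ _ Set.subset_union_right
      (Set.union_subset_union_left C Set.subset_union_right)
      (P.symmetry _ _ _ (P.normality _ _ _ hb))
  have hX_over_YC : P.ind X (Y ∪ C) {b} :=
    P.monotonicity _ _ _ _ (P.symmetry _ _ _ hb_base) (Set.subset_union_left.trans
      Set.subset_union_left)
  have hbYC_over_YC : P.ind ({b} ∪ (Y ∪ C)) (Y ∪ C) X :=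
    P.normality _ _ _ (P.symmetry _ _ _ hX_over_YC)
  have hYC_over_C : P.ind (Y ∪ C) C X := P.normality _ _ _ (P.symmetry _ _ _ hXY)
  have hbYC_over_C : P.ind ({b} ∪ (Y ∪ C)) C X :=
    P.transitivity _ _ _ _ Set.subset_union_right Set.subset_union_right hbYC_over_YC hYC_over_C
  refine P.symmetry _ _ _ (P.monotonicity _ _ _ _ hbYC_over_C ?_)
  rw [Set.insert_eq, ← Set.union_assoc]
  exact Set.subset_union_left

variable {ι : Type*} [LinearOrder ι] {A : Set M} {a : ι → M}

theorem ind_image_of_disjoint_of_subset (hind : ∀ j : ι, P.ind (a '' {i | i < j}) A {a j})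
    (u : Finset ι) : ∀ s t : Set ι, s ⊆ u → t ⊆ u → Disjoint s t →
      P.ind (a '' s) A (a '' t) := by
  induction u using Finset.induction_on_max with
  | empty =>
    intro s t _ ht _
    obtain rfl : t = ∅ := by simpa using ht
    simpa using P.ind_empty_right (a '' s) A
  | insert j u hlt ih =>
    simp only [Finset.coe_insert]
    -- by symmetry of `ind` we may assume that `j ∉ s`
    suffices main : ∀ s t : Set ι, s ⊆ insert j u → t ⊆ insert j u → Disjoint s t →
        j ∉ s → P.ind (a '' s) A (a '' t) by
      intro s t hs ht hst
      by_cases hjs : j ∈ s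
      · exact P.symmetry _ _ _ (main t s ht hs hst.symm (Set.disjoint_left.mp hst hjs))
      · exact main s t hs ht hst hjs
    intro s t hs ht hst hjs
    have hs_u : s ⊆ u := (Set.subset_insert_iff_of_notMem hjs).mp hs
    have ht_u : t \ {j} ⊆ u := Set.sdiff_singleton_subset_iff.mpr ht
    have hbefore : s ∪ t \ {j} ⊆ {i | i < j} :=
      Set.union_subset (fun i hi ↦ hlt i (hs_u hi)) (fun i hi ↦ hlt i (ht_u hi))
    have hnew : P.ind (a '' s ∪ a '' (t \ {j})) A {a j} := by
      rw [← Set.image_union]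
      exact P.monotonicity _ _ _ _ (hind j) (Set.image_mono hbefore)
    have hrest := ih s (t \ {j}) hs_u ht_u (hst.mono_right Set.sdiff_subset)
    refine P.ind_mono_right (P.ind_insert_right hrest hnew) ?_
    rw [← Set.image_insert_eq, Set.insert_sdiff_singleton]
    exact Set.image_mono (Set.subset_insert j _)

theorem ind_image_of_disjoint (hind : ∀ j : ι, P.ind (a '' {i | i < j}) A {a j})
    {s t : Set ι} (hs : s.Finite) (ht : t.Finite) (hst : Disjoint s t) :
    P.ind (a '' s) A (a '' t) := by
  refine P.ind_image_of_disjoint_of_subset hind (hs.union ht).toFinset s t ?_ ?_ hst <;> simp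

end PreIndep

theorem indep_sequence_finite_disjoint_general {M : Type*} (P : PreIndep M)
    {ι : Type*} [LinearOrder ι] (A : Set M) (a : ι → M)
    (hind : ∀ j : ι, P.ind (a '' {i | i < j}) A {a j})
    (S T : Set M) (hS : S ⊆ Set.range a) (hT : T ⊆ Set.range a)
    (hSfin : S.Finite) (hTfin : T.Finite) (hST : S ∩ T = ∅) :
    P.ind S A T := by
  obtain ⟨s, -, hs, rfl⟩ :=
    Set.exists_subset_image_finite_and.mp ⟨S, by rwa [Set.image_univ], hSfin, rfl⟩
  obtain ⟨t, -, ht, rfl⟩ :=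
    Set.exists_subset_image_finite_and.mp ⟨T, by rwa [Set.image_univ], hTfin, rfl⟩
  exact P.ind_image_of_disjoint hind hs ht (Set.disjoint_iff_inter_eq_empty.mpr hST).of_image

/-- Any two disjoint finite subsets of an independent sequence over `A`
are independent over `A`. -/
theorem indep_sequence_finite_disjoint {M : Type*} (P : PreIndep M)
    {ι : Type*} [LinearOrder ι] (A : Set M) (a : ι → M)
    (hinj : Function.Injective a)
    (hind : ∀ j : ι, P.ind (a '' {i | i < j}) A {a j})
    (S T : Set M) (hS : S ⊆ Set.range a) (hT : T ⊆ Set.range a)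
    (hSfin : S.Finite) (hTfin : T.Finite) (hST : S ∩ T = ∅) :
    P.ind S A T :=
  indep_sequence_finite_disjoint_general P A a hind S T hS hT hSfin hTfin hST
end

section
/- Let ⫝ be a pre-independence relation on a set M, A ⊆ M, and (a_i)_{i∈I} an independent sequence over A indexed by a linear order (I,<). Then for every subset S of {a_i : i ∈ I}, we have S ⫝_A ({a_i : i ∈ I} \ S). -/
namespace PreIndep

section

variable {M : Type*} {P : PreIndep M} {A A' B B' C D : Set M}

theorem ind_symm (h : P.ind A C B) : P.ind B C A :=
  P.symmetry A B C h

theorem ind_mono (h : P.ind A C B) (hA : A' ⊆ A) (hB : B' ⊆ B) : P.ind A' C B' :=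
  P.monotonicity _ _ _ _ (ind_symm (P.monotonicity _ _ _ _ (ind_symm h) hB)) hA

theorem ind_union_base_left (h : P.ind A C B) : P.ind (A ∪ C) C B :=
  P.normality A B C h

theorem ind_union_base_right (h : P.ind A C B) : P.ind A C (B ∪ C) :=
  ind_symm (ind_union_base_left (ind_symm h))

theorem empty_ind (P : PreIndep M) (C B : Set M) : P.ind ∅ C B :=
  ind_mono (P.existence C B) (Set.empty_subset C) subset_rfl

theorem ind_of_forall_finite
    (h : ∀ A₀ ⊆ A, A₀.Finite → ∀ B₀ ⊆ B, B₀.Finite → P.ind A₀ C B₀) : P.ind A C B :=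
  P.finiteCharacter _ _ _ fun A₀ hA₀ hA₀fin =>
    ind_symm (P.finiteCharacter _ _ _ fun B₀ hB₀ hB₀fin => ind_symm (h A₀ hA₀ hA₀fin B₀ hB₀ hB₀fin))

/-- Base monotonicity moves `D` over the base `B ∪ C`, and transitivity through `B ⫝_C A`
brings it back down to `C`. -/
theorem ind_union_right (h₁ : P.ind A C B) (h₂ : P.ind (A ∪ B) C D) : P.ind A C (B ∪ D) := by
  have hD : P.ind (D ∪ C) (B ∪ C) A := by
    have h := ind_union_base_right (ind_union_base_left (ind_symm h₂))
    refine ind_mono (P.baseMonotonicity _ _ _ _ Set.subset_union_right ?_ h) subset_rfl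
      (Set.subset_union_left.trans Set.subset_union_left)
    exact Set.union_subset_union_left C Set.subset_union_right
  have hB : P.ind (B ∪ C) C A := ind_union_base_left (ind_symm h₁)
  have hBD : P.ind (D ∪ C ∪ (B ∪ C)) C A :=
    P.transitivity _ _ _ _ Set.subset_union_right Set.subset_union_right
      (ind_union_base_left hD) hB
  exact ind_symm (ind_mono hBD (by grind) subset_rfl)

end

variable {M ι : Type*} [LinearOrder ι] {P : PreIndep M} {A : Set M} {a : ι → M}

theorem ind_image_diff_of_subset_finset (hind : ∀ j : ι, P.ind (a '' {i | i < j}) A {a j})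
    (T : Finset ι) : ∀ F ⊆ (T : Set ι), P.ind (a '' F) A (a '' (T \ F)) := by
  induction T using Finset.induction_on_max with
  | empty =>
    intro F hF
    rw [Finset.coe_empty, Set.subset_empty_iff] at hF
    rw [hF, Set.image_empty]
    exact P.empty_ind _ _
  | insert m T hlt ih =>
    have hm : P.ind (a '' T) A {a m} :=
      ind_mono (hind m) (Set.image_mono fun i hi => hlt i hi) subset_rfl
    have step : ∀ G ⊆ (T : Set ι), P.ind (a '' G) A (a '' (T \ G ∪ {m})) := by
      intro G hG
      rw [Set.image_union, Set.image_singleton]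
      refine ind_union_right (ih G hG) (ind_mono hm ?_ subset_rfl)
      exact Set.union_subset (Set.image_mono hG) (Set.image_mono Set.sdiff_subset)
    intro F hF
    rw [Finset.coe_insert] at hF ⊢
    by_cases hmF : m ∈ F
    · exact ind_symm (ind_mono (step (T \ F) Set.sdiff_subset)
        (Set.image_mono (by grind)) (Set.image_mono (by grind)))
    · exact ind_mono (step F (by grind)) subset_rfl (Set.image_mono (by grind))

theorem ind_image_compl (hind : ∀ j : ι, P.ind (a '' {i | i < j}) A {a j}) (F : Set ι) :
    P.ind (a '' F) A (a '' Fᶜ) := by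
  refine ind_of_forall_finite fun X hX hXfin Y hY hYfin => ?_
  obtain ⟨F₀, hF₀, hF₀fin, rfl⟩ := Set.exists_subset_image_finite_and.1 ⟨X, hX, hXfin, rfl⟩
  obtain ⟨G₀, hG₀, hG₀fin, rfl⟩ := Set.exists_subset_image_finite_and.1 ⟨Y, hY, hYfin, rfl⟩
  have h := ind_image_diff_of_subset_finset hind (hF₀fin.union hG₀fin).toFinset F₀ (by simp)
  refine ind_mono h subset_rfl (Set.image_mono ?_)
  rw [Set.Finite.coe_toFinset]
  grind

end PreIndep

theorem indep_sequence_subset_compl_general {M : Type*} (P : PreIndep M)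
    {ι : Type*} [LinearOrder ι] (A : Set M) (a : ι → M)
    (hind : ∀ j : ι, P.ind (a '' {i | i < j}) A {a j})
    (S : Set M) (hS : S ⊆ Set.range a) :
    P.ind S A (Set.range a \ S) := by
  have h := P.ind_image_compl hind (a ⁻¹' S)
  rwa [Set.image_preimage_eq_of_subset hS, ← Set.preimage_compl, Set.image_preimage_eq_inter_range,
    Set.inter_comm, ← Set.sdiff_eq] at h

/-- Any subset of an independent sequence over `A` is independent over `A`
from the rest of the sequence. -/
theorem indep_sequence_subset_compl {M : Type*} (P : PreIndep M)
    {ι : Type*} [LinearOrder ι] (A : Set M) (a : ι → M)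
    (hinj : Function.Injective a)
    (hind : ∀ j : ι, P.ind (a '' {i | i < j}) A {a j})
    (S : Set M) (hS : S ⊆ Set.range a) :
    P.ind S A (Set.range a \ S) :=
  indep_sequence_subset_compl_general P A a hind S hS
end

section
/- Let ⫝ be a pre-independence relation on a set M and let A, B, C, U ⊆ M. If B ⫝_C B and C ∪ A ⫝_B U, then A ⫝_C U. -/
namespace PreIndep

variable {M : Type*} (P : PreIndep M) {A B C D U : Set M}

theorem ind_union_base_of_ind_union_left (h : P.ind (D ∪ A) B U) : P.ind A (B ∪ D) U := by
  have hU : P.ind U B ((D ∪ A) ∪ B) := P.symmetry _ _ _ (P.normality _ _ _ h)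
  have hU' : P.ind U (B ∪ D) ((D ∪ A) ∪ B) :=
    P.baseMonotonicity _ _ _ _ Set.subset_union_left
      (Set.union_subset Set.subset_union_right (Set.subset_union_left.trans Set.subset_union_left))
      hU
  exact P.monotonicity _ _ _ _ (P.symmetry _ _ _ hU')
    (Set.subset_union_right.trans Set.subset_union_left)

theorem union_base_ind_of_ind_self (h : P.ind B C B) (U : Set M) : P.ind (B ∪ C) C U :=
  P.normality _ _ _ (P.antiReflexivity _ _ h U)

theorem ind_of_ind_of_subset_base {C' : Set M} (hC : C ⊆ C') (hA : P.ind A C' U)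
    (hC' : P.ind C' C U) : P.ind A C U := by
  have hAC' : P.ind (A ∪ C') C U :=
    P.transitivity _ _ _ _ hC Set.subset_union_right (P.normality _ _ _ hA) hC'
  exact P.monotonicity _ _ _ _ hAC' Set.subset_union_left

end PreIndep

/-- If `B ⫝_C B` and `C ∪ A ⫝_B U`, then `A ⫝_C U`. -/
theorem preIndep_base_change {M : Type*} (P : PreIndep M) (A B C U : Set M)
    (h1 : P.ind B C B) (h2 : P.ind (C ∪ A) B U) :
    P.ind A C U :=
  P.ind_of_ind_of_subset_base Set.subset_union_right (P.ind_union_base_of_ind_union_left h2)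
    (P.union_base_ind_of_ind_self h1 U)
end

section
/- Let F be a field, E a commutative ring that is an F-algebra, n ≥ 1, and a : Fin n → E a family that is algebraically independent over F. Then for every j < n, the element ∑_{i<n} a(i) is transcendental over the F-subalgebra generated by {a(i) : i < n, i ≠ j}. (Hence every finite algebraically independent family is a federated sequence for the algebraic-closure pregeometry.) -/
open Polynomial in
theorem Transcendental.add_algebraMap {R A : Type*} [CommRing R] [CommRing A] [Algebra R A]
    {x : A} (hx : Transcendental R x) (r : R) : Transcendental R (x + algebraMap R A r) := by
  nontriviality R
  have h := hx.aeval (X + C r) (by simp) (by simp [monic_X_add_C r])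
  rwa [map_add, aeval_X, aeval_C] at h

theorem sum_transcendental_of_algebraicIndependent_general
    {F E : Type*} [Field F] [CommRing E] [Algebra F E]
    (n : ℕ) (a : Fin n → E) (ha : AlgebraicIndependent F a) :
    ∀ j : Fin n, Transcendental (Algebra.adjoin F (a '' {i | i ≠ j})) (∑ i, a i) := by
  intro j
  have hrest : ∑ i ∈ Finset.univ.erase j, a i ∈ Algebra.adjoin F (a '' {i | i ≠ j}) :=
    Subalgebra.sum_mem _ fun i hi ↦ Algebra.subset_adjoin ⟨i, Finset.ne_of_mem_erase hi, rfl⟩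
  rw [← Finset.add_sum_erase _ a (Finset.mem_univ j)]
  exact (ha.transcendental_adjoin (s := {i | i ≠ j}) (by simp)).add_algebraMap ⟨_, hrest⟩

/-- If `a : Fin n → E` (with `n ≥ 1`) is algebraically independent over a field `F`,
then for every `j`, the sum `∑ i, a i` is transcendental over the `F`-subalgebra
generated by the `a i` for `i ≠ j`: algebraically independent families are
federated sequences for the algebraic-closure pregeometry. -/
theorem sum_transcendental_of_algebraicIndependent
    {F E : Type*} [Field F] [CommRing E] [Algebra F E]
    (n : ℕ) (hn : 1 ≤ n) (a : Fin n → E) (ha : AlgebraicIndependent F a) :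
    ∀ j : Fin n, Transcendental (Algebra.adjoin F (a '' {i | i ≠ j})) (∑ i, a i) :=
  sum_transcendental_of_algebraicIndependent_general n a ha
end

section
/- (Soundness of AIRAIndL(⫝)) Let ⫝ be a pre-independence relation on a set M and Σ a set of independence atoms. If Σ ⊢ x⃗ ⊥ y⃗ in the deductive system of atomic independence logic, then for every assignment s : Var → M such that s(v⃗) ⫝_∅ s(w⃗) for all atoms v⃗ ⊥ w⃗ ∈ Σ, we have s(x⃗) ⫝_∅ s(y⃗). -/
/-- Variables of atomic independence logic: a countably infinite set. -/
abbrev Var := ℕ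

/-- An independence atom `x⃗ ⊥ y⃗` is represented as the pair of finite
sequences of variables `(x⃗, y⃗)`. -/
abbrev IndAtom := List Var × List Var

/-- The deductive system of atomic independence logic: `Derives Γ x y` means
`Γ ⊢ x⃗ ⊥ y⃗`. -/
inductive Derives (Γ : Set IndAtom) : List Var → List Var → Prop
  /-- atoms of `Γ` may be used in deductions -/
  | hyp {x y : List Var} : (x, y) ∈ Γ → Derives Γ x y
  /-- (a₃) `x⃗ ⊥ ∅` -/
  | triv (x : List Var) : Derives Γ x []
  /-- (b₃) from `x⃗ ⊥ y⃗` infer `y⃗ ⊥ x⃗` -/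
  | symm {x y : List Var} : Derives Γ x y → Derives Γ y x
  /-- (c₃) from `x⃗ ⊥ y⃗z⃗` infer `x⃗ ⊥ y⃗` -/
  | weak {x y z : List Var} : Derives Γ x (y ++ z) → Derives Γ x y
  /-- (d₃) from `x⃗ ⊥ y⃗` and `x⃗y⃗ ⊥ z⃗` infer `x⃗ ⊥ y⃗z⃗` -/
  | exch {x y z : List Var} : Derives Γ x y → Derives Γ (x ++ y) z → Derives Γ x (y ++ z)
  /-- (e₃) from `x ⊥ x` infer `x ⊥ y⃗` for arbitrary `y⃗` -/
  | alg {v : Var} (y : List Var) : Derives Γ [v] [v] → Derives Γ [v] y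
  /-- (f₃) from `x⃗ ⊥ y⃗` infer `πx⃗ ⊥ σy⃗` for permutations `π`, `σ` -/
  | perm {x x' y y' : List Var} :
      Derives Γ x y → x.Perm x' → y.Perm y' → Derives Γ x' y'
  /-- (g₃) from `x⃗vz⃗ ⊥ w⃗` infer `x⃗vvz⃗ ⊥ w⃗` -/
  | dup {x z w : List Var} (v : Var) :
      Derives Γ (x ++ v :: z) w → Derives Γ (x ++ v :: v :: z) w

/-- `AtomHolds P s x y`: the independence atom `x⃗ ⊥ y⃗` is satisfied under the
assignment `s`, i.e. `s(x⃗) ⫝_∅ s(y⃗)`, where `s(x⃗)` is the set of values of the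
variables occurring in `x⃗`. -/
def AtomHolds {M : Type*} (P : PreIndep M) (s : Var → M) (x y : List Var) : Prop :=
  P.ind (s '' {v : Var | v ∈ x}) ∅ (s '' {v : Var | v ∈ y})

/-- Semantic consequence in `AIRAIndL(⫝)`: every assignment satisfying all
atoms of `Γ` satisfies `x⃗ ⊥ y⃗`. -/
def Consequence {M : Type*} (P : PreIndep M) (Γ : Set IndAtom)
    (x y : List Var) : Prop :=
  ∀ s : Var → M, (∀ p ∈ Γ, AtomHolds P s p.1 p.2) → AtomHolds P s x y

namespace PreIndep

variable {M : Type*} (P : PreIndep M)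

theorem ind_base_self (A B : Set M) : P.ind B A A :=
  P.symmetry _ _ _ (P.existence A B)

theorem ind_mono_right_s11 {A B C D : Set M} (h : P.ind A C B) (hD : D ⊆ B) : P.ind A C D :=
  P.symmetry _ _ _ (P.monotonicity _ _ _ _ (P.symmetry _ _ _ h) hD)

/-- Rule (d₃): pass to the base `Y` by base monotonicity, then return to `∅` by transitivity,
which is where `X ⫝ Y` enters. -/
theorem ind_union_right_s11 {X Y Z : Set M} (hXY : P.ind X ∅ Y) (hXYZ : P.ind (X ∪ Y) ∅ Z) :
    P.ind X ∅ (Y ∪ Z) := by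
  have hZ_Y : P.ind Z Y (X ∪ Y) :=
    P.baseMonotonicity _ _ _ _ (Set.empty_subset Y) Set.subset_union_right
      (P.symmetry _ _ _ hXYZ)
  have hX_Y : P.ind X Y Z :=
    P.monotonicity _ _ _ _ (P.symmetry _ _ _ hZ_Y) Set.subset_union_left
  have hYZ_Y : P.ind (Y ∪ Z) Y X := by
    simpa only [Set.union_comm Z Y] using P.normality _ _ _ (P.symmetry _ _ _ hX_Y)
  exact P.symmetry _ _ _
    (P.transitivity _ _ _ _ (Set.empty_subset Y) Set.subset_union_left hYZ_Y
      (P.symmetry _ _ _ hXY))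

end PreIndep

theorem Set.image_setOf_mem_append {α β : Type*} (f : α → β) (a b : List α) :
    f '' {v | v ∈ a ++ b} = f '' {v | v ∈ a} ∪ f '' {v | v ∈ b} := by
  rw [← Set.image_union]
  ext
  simp

namespace AtomHolds

variable {M : Type*} {P : PreIndep M} {s : Var → M}

theorem nil_right (x : List Var) : AtomHolds P s x [] := by
  simpa only [AtomHolds, List.not_mem_nil, Set.ofPred_false, Set.image_empty]
    using P.ind_base_self ∅ _

theorem symm {x y : List Var} (h : AtomHolds P s x y) : AtomHolds P s y x :=
  P.symmetry _ _ _ h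

theorem of_append_right {x y z : List Var} (h : AtomHolds P s x (y ++ z)) :
    AtomHolds P s x y := by
  unfold AtomHolds at h
  rw [Set.image_setOf_mem_append] at h
  exact P.ind_mono_right_s11 h Set.subset_union_left

theorem append_right {x y z : List Var} (hxy : AtomHolds P s x y)
    (hxyz : AtomHolds P s (x ++ y) z) : AtomHolds P s x (y ++ z) := by
  unfold AtomHolds at *
  rw [Set.image_setOf_mem_append] at hxyz ⊢
  exact P.ind_union_right_s11 hxy hxyz

theorem of_self {x : List Var} (h : AtomHolds P s x x) (y : List Var) : AtomHolds P s x y :=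
  P.antiReflexivity _ _ h _

theorem congr {x x' y y' : List Var} (h : AtomHolds P s x y) (hx : ∀ v, v ∈ x ↔ v ∈ x')
    (hy : ∀ v, v ∈ y ↔ v ∈ y') : AtomHolds P s x' y' := by
  have hx' : {v | v ∈ x} = {v | v ∈ x'} := Set.ext hx
  have hy' : {v | v ∈ y} = {v | v ∈ y'} := Set.ext hy
  rwa [AtomHolds, ← hx', ← hy']

end AtomHolds

/-- (Soundness of AIRAIndL(⫝)) If `Γ ⊢ x⃗ ⊥ y⃗`, then every assignment
satisfying all atoms of `Γ` satisfies `x⃗ ⊥ y⃗`. -/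
theorem airaindl_sound {M : Type*} (P : PreIndep M) (Γ : Set IndAtom)
    (x y : List Var) (h : Derives Γ x y) :
    Consequence P Γ x y := by
  intro s hs
  induction h with
  | hyp hmem => exact hs _ hmem
  | triv x => exact AtomHolds.nil_right x
  | symm _ ih => exact ih.symm
  | weak _ ih => exact ih.of_append_right
  | exch _ _ ih₁ ih₂ => exact ih₁.append_right ih₂
  | alg y _ ih => exact ih.of_self y
  | perm _ hx hy ih => exact ih.congr (fun _ => hx.mem_iff) (fun _ => hy.mem_iff)
  | dup v _ ih => exact ih.congr (fun _ => by simp) (fun _ => Iff.rfl)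
end
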